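/- Let Γ be a finite group acting on a commutative ring A by ring automorphisms, with |Γ| invertible in A. Let 𝔪 ⊆ A be an ideal with 𝔪² = 0, stable under Γ. If B is a Γ-equivariant A-algebra and φ₀: B → A/𝔪 is a Γ-equivariant A-algebra homomorphism which admits some (not necessarily equivariant) A-algebra lift φ: B → A, then φ₀ admits a Γ-equivariant lift φ₁: B → A. -/

import Mathlib

/-! Conjugating `φ` by `γ` gives ring homomorphisms `b ↦ γ⁻¹ • φ (γ • b)` that all agree with `φ`
modulo `𝔪`. As `𝔪² = 0`, such lifts differ from `φ` by `φ`-derivations into `𝔪`, so any affine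
combination of them is again a ring homomorphism. The Reynolds average
`|Γ|⁻¹ ∑ γ, γ⁻¹ • φ (γ • b)` is such a combination, and reindexing the sum makes it equivariant. -/

open Finset

theorem Ideal.mul_eq_zero_of_mul_self_eq_bot {A : Type*} [CommRing A] {I : Ideal A}
    (hI : I * I = ⊥) {x y : A} (hx : x ∈ I) (hy : y ∈ I) : x * y = 0 := by
  simpa [hI] using Ideal.mul_mem_mul hx hy

theorem smul_eq_of_mul_eq_one {G M : Type*} [Monoid G] [CommMonoid M] [MulDistribMulAction G M]
    {g : G} {c n : M} (hcn : c * n = 1) (hn : g • n = n) : g • c = c :=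
  left_inv_eq_right_inv (a := n) (by rw [← smul_one g, ← hcn, smul_mul', hn])
    (by rw [mul_comm, hcn])

section AffineCombination

variable {ι A B : Type*} [CommRing A] [CommRing B] (s : Finset ι) {w : ι → A}

theorem Finset.sum_mul_eq_add_sum_mul_sub (hw : ∑ i ∈ s, w i = 1) (f : ι → A) (a : A) :
    ∑ i ∈ s, w i * f i = a + ∑ i ∈ s, w i * (f i - a) := by
  simp [mul_sub, sum_sub_distrib, ← sum_mul, hw]

variable {I : Ideal A} {ψ : ι → B →+* A} {χ : B →+* A}

theorem sum_mul_map_mul_of_sub_mem_of_mul_self_eq_bot (hw : ∑ i ∈ s, w i = 1)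
    (hI : I * I = ⊥) (hψ : ∀ i ∈ s, ∀ b, ψ i b - χ b ∈ I) (x y : B) :
    ∑ i ∈ s, w i * ψ i (x * y) = (∑ i ∈ s, w i * ψ i x) * ∑ i ∈ s, w i * ψ i y := by
  set U := ∑ i ∈ s, w i * (ψ i x - χ x)
  set V := ∑ i ∈ s, w i * (ψ i y - χ y)
  have hleibniz : ∀ i ∈ s,
      ψ i (x * y) = χ x * χ y + (χ x * (ψ i y - χ y) + χ y * (ψ i x - χ x)) := by
    intro i hi
    have := Ideal.mul_eq_zero_of_mul_self_eq_bot hI (hψ i hi x) (hψ i hi y)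
    rw [map_mul]
    linear_combination this
  have hxy : ∑ i ∈ s, w i * ψ i (x * y) = χ x * χ y + (χ x * V + χ y * U) := by
    rw [sum_congr rfl fun i hi => congrArg (w i * ·) (hleibniz i hi)]
    simp only [mul_add, sum_add_distrib, ← sum_mul, hw, one_mul, mul_sum, U, V, mul_left_comm]
  have hUV : U * V = 0 := Ideal.mul_eq_zero_of_mul_self_eq_bot hI
    (sum_mem fun i hi => I.mul_mem_left _ (hψ i hi x))
    (sum_mem fun i hi => I.mul_mem_left _ (hψ i hi y))
  rw [hxy, sum_mul_eq_add_sum_mul_sub s hw (ψ · x) (χ x),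
    sum_mul_eq_add_sum_mul_sub s hw (ψ · y) (χ y)]
  linear_combination -hUV

def RingHom.affineCombination (hw : ∑ i ∈ s, w i = 1) (ψ : ι → B →+* A) (hI : I * I = ⊥)
    (hψ : ∀ i ∈ s, ∀ b, ψ i b - χ b ∈ I) : B →+* A where
  toFun b := ∑ i ∈ s, w i * ψ i b
  map_one' := by simp [hw]
  map_mul' := sum_mul_map_mul_of_sub_mem_of_mul_self_eq_bot s hw hI hψ
  map_zero' := by simp
  map_add' x y := by simp [mul_add, sum_add_distrib]

theorem RingHom.affineCombination_apply (hw : ∑ i ∈ s, w i = 1) (ψ : ι → B →+* A)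
    (hI : I * I = ⊥) (hψ : ∀ i ∈ s, ∀ b, ψ i b - χ b ∈ I) (b : B) :
    affineCombination s hw ψ hI hψ b = ∑ i ∈ s, w i * ψ i b :=
  rfl

theorem RingHom.affineCombination_apply_of_forall_eq (hw : ∑ i ∈ s, w i = 1) (ψ : ι → B →+* A)
    (hI : I * I = ⊥) (hψ : ∀ i ∈ s, ∀ b, ψ i b - χ b ∈ I) {b : B} {a : A}
    (h : ∀ i ∈ s, ψ i b = a) : affineCombination s hw ψ hI hψ b = a := by
  simp [affineCombination_apply, sum_congr rfl fun i hi => congrArg (w i * ·) (h i hi),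
    ← sum_mul, hw]

theorem RingHom.affineCombination_sub_mem (hw : ∑ i ∈ s, w i = 1) (ψ : ι → B →+* A)
    (hI : I * I = ⊥) (hψ : ∀ i ∈ s, ∀ b, ψ i b - χ b ∈ I) (b : B) :
    affineCombination s hw ψ hI hψ b - χ b ∈ I := by
  rw [affineCombination_apply, sum_mul_eq_add_sum_mul_sub s hw _ (χ b), add_sub_cancel_left]
  exact sum_mem fun i hi => I.mul_mem_left _ (hψ i hi b)

end AffineCombination

namespace RingHom

variable {Γ A B : Type*} [Group Γ] [Semiring A] [Semiring B] [MulSemiringAction Γ A]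
  [MulSemiringAction Γ B]

def smulConj (γ : Γ) (φ : B →+* A) : B →+* A :=
  (MulSemiringAction.toRingHom Γ A γ⁻¹).comp (φ.comp (MulSemiringAction.toRingHom Γ B γ))

@[simp]
theorem smulConj_apply (γ : Γ) (φ : B →+* A) (b : B) : smulConj γ φ b = γ⁻¹ • φ (γ • b) :=
  rfl

theorem sum_smulConj_smul [Fintype Γ] (φ : B →+* A) (δ : Γ) (b : B) :
    ∑ γ : Γ, smulConj γ φ (δ • b) = δ • ∑ γ : Γ, smulConj γ φ b := by
  rw [smul_sum]
  exact (Fintype.sum_equiv (Equiv.mulRight δ⁻¹) _ _ fun γ => by simp [smul_smul, mul_assoc]).symm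

theorem smulConj_sub_mem {R : Type*} [Ring R] [MulSemiringAction Γ R] {I : Ideal R} {γ : Γ}
    (hI : ∀ a ∈ I, γ⁻¹ • a ∈ I) {φ : B →+* R} {b : B} (h : φ (γ • b) - γ • φ b ∈ I) :
    smulConj γ φ b - φ b ∈ I := by
  simpa [smul_sub] using hI _ h

end RingHom

/-- Equivariant infinitesimal lifting (key step of Lemma `lem:reduced`):
if `Γ` acts on `A` and on the `A`-algebra `B` compatibly, `𝔪` is a `Γ`-stable
square-zero ideal, `|Γ|` is invertible in `A`, and the `A`-algebra map
`φ : B → A` is a lift of a `Γ`-equivariant map `B → A/𝔪` (i.e. `φ` is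
equivariant modulo `𝔪`), then there is a genuinely `Γ`-equivariant `A`-algebra
lift `φ₁` of the same map `B → A/𝔪`. -/
theorem equivariant_lift_of_square_zero {Γ : Type*} [Group Γ] [Fintype Γ]
    {A B : Type*} [CommRing A] [CommRing B] [Algebra A B]
    [MulSemiringAction Γ A] [MulSemiringAction Γ B]
    (hcompat : ∀ (γ : Γ) (a : A), γ • (algebraMap A B a) = algebraMap A B (γ • a))
    (hunit : IsUnit ((Fintype.card Γ : ℕ) : A))
    (𝔪 : Ideal A) (hsq : 𝔪 * 𝔪 = ⊥)
    (hstab : ∀ (γ : Γ), ∀ a ∈ 𝔪, γ • a ∈ 𝔪)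
    (φ : B →+* A) (hφA : ∀ a : A, φ (algebraMap A B a) = a)
    (hφeq : ∀ (γ : Γ) (b : B), φ (γ • b) - γ • φ b ∈ 𝔪) :
    ∃ φ₁ : B →+* A,
      (∀ a : A, φ₁ (algebraMap A B a) = a) ∧
      (∀ b : B, φ₁ b - φ b ∈ 𝔪) ∧
      (∀ (γ : Γ) (b : B), φ₁ (γ • b) = γ • φ₁ b) := by
  obtain ⟨c, hc⟩ := hunit.exists_left_inv
  have hc_fixed (γ : Γ) : γ • c = c :=
    smul_eq_of_mul_eq_one hc (map_natCast (MulSemiringAction.toRingHom Γ A γ) _)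
  have hw : ∑ _γ : Γ, c = 1 := by simpa [mul_comm] using hc
  have hconj : ∀ γ ∈ univ, ∀ b, φ.smulConj γ b - φ b ∈ 𝔪 := fun γ _ b =>
    RingHom.smulConj_sub_mem (hstab γ⁻¹) (hφeq γ b)
  refine ⟨.affineCombination univ hw (φ.smulConj ·) hsq hconj, fun a => ?_,
    RingHom.affineCombination_sub_mem univ hw _ hsq hconj, fun δ b => ?_⟩
  · exact RingHom.affineCombination_apply_of_forall_eq univ hw _ hsq hconj fun γ _ => by
      simp [hcompat, hφA]
  · simp only [RingHom.affineCombination_apply, ← mul_sum, RingHom.sum_smulConj_smul, smul_mul',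
      hc_fixed]
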